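/- arXiv:2302.08755 — 2 statements merged into one kernel-verified Lean document; each statement's English description precedes it below -/
import Mathlib

section
/- Let {P_t}_{t∈T} be a Markov semigroup on a Polish space (X, ρ) with T = ℕ₊ which is Feller and asymptotically stable with unique invariant measure μ*. If Int(supp μ*) ≠ ∅, then {P_t} satisfies the e-property at every point of X. -/
open MeasureTheory Filter Topology Metric ENNReal
open scoped Classical

noncomputable section

variable {X : Type*}

/-- A bounded Lipschitz real-valued function. -/
def BddLip [PseudoMetricSpace X] (f : X → ℝ) : Prop :=
  (∃ K, LipschitzWith K f) ∧ ∃ C, ∀ x, |f x| ≤ C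

/-- The topological support of a Borel measure:
`{x : μ(B(x,ε)) > 0 for every ε > 0}`. -/
def msupp [PseudoMetricSpace X] [MeasurableSpace X] (μ : Measure X) : Set X :=
  {x | ∀ ε > 0, 0 < μ (Metric.ball x ε)}

/-! ### Discrete time `T = ℕ₊` -/

/-- Action of a transition kernel family on bounded Borel functions:
`P_n f (x) = ∫ f(y) P_n(x,dy)`. -/
def PfN [MeasurableSpace X] (P : ℕ → X → Measure X) (n : ℕ) (f : X → ℝ) (x : X) : ℝ :=
  ∫ y, f y ∂ P n x

/-- A Markov semigroup indexed by `T = ℕ₊ = {1,2,...}`. -/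
def IsMarkovSemigroupN [MeasurableSpace X] (P : ℕ → X → Measure X) : Prop :=
  (∀ n x, 1 ≤ n → IsProbabilityMeasure (P n x)) ∧
  (∀ (n : ℕ) (A : Set X), 1 ≤ n → MeasurableSet A → Measurable fun x => P n x A) ∧
  ∀ (m n : ℕ) (x : X) (A : Set X), 1 ≤ m → 1 ≤ n → MeasurableSet A →
    P (m + n) x A = ∫⁻ y, P n y A ∂ P m x

/-- The Feller property: each `P_n` maps bounded continuous functions to
bounded continuous functions. -/
def FellerN [MeasurableSpace X] [PseudoMetricSpace X] (P : ℕ → X → Measure X) : Prop :=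
  ∀ n, 1 ≤ n → ∀ f : X → ℝ, Continuous f → (∃ C, ∀ x, |f x| ≤ C) →
    Continuous (fun x => PfN P n f x) ∧ ∃ C, ∀ x, |PfN P n f x| ≤ C

/-- The e-property at a point `z`. -/
def EPropN [MeasurableSpace X] [PseudoMetricSpace X] (P : ℕ → X → Measure X) (z : X) : Prop :=
  ∀ f : X → ℝ, BddLip f → ∀ ε > 0, ∃ δ > 0, ∀ x, dist x z < δ → ∀ n, 1 ≤ n →
    |PfN P n f x - PfN P n f z| < ε

/-- The eventual e-property at a point `z`. -/
def EventualEPropN [MeasurableSpace X] [PseudoMetricSpace X] (P : ℕ → X → Measure X)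
    (z : X) : Prop :=
  ∀ f : X → ℝ, BddLip f → ∀ ε > 0, ∃ δ > 0, ∃ n₀ : ℕ, 1 ≤ n₀ ∧
    ∀ x, dist x z < δ → ∀ n, n₀ ≤ n → |PfN P n f x - PfN P n f z| < ε

/-- Eventual continuity (asymptotic equicontinuity) at a point `z`. -/
def EvContN [MeasurableSpace X] [PseudoMetricSpace X] (P : ℕ → X → Measure X) (z : X) : Prop :=
  ∀ f : X → ℝ, BddLip f → ∀ ε > 0, ∃ δ > 0, ∀ x, dist x z < δ →
    Filter.limsup (fun n => |PfN P n f x - PfN P n f z|) Filter.atTop ≤ ε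

/-- Invariance of a measure: `P_n μ = μ` for all `n ∈ ℕ₊`. -/
def InvariantN [MeasurableSpace X] (P : ℕ → X → Measure X) (μ : Measure X) : Prop :=
  ∀ n, 1 ≤ n → μ.bind (P n) = μ

/-- `μ` is an ergodic invariant measure: it is invariant and every Borel set `A`
with `P_n 1_A = 1_A` μ-a.e. for all `n` has `μ(A) ∈ {0,1}`. -/
def ErgodicMeasN [MeasurableSpace X] (P : ℕ → X → Measure X) (μ : Measure X) : Prop :=
  InvariantN P μ ∧
  ∀ A : Set X, MeasurableSet A →
    (∀ n, 1 ≤ n → ∀ᵐ x ∂μ, P n x A = A.indicator (fun _ => (1 : ℝ≥0∞)) x) →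
    μ A = 0 ∨ μ A = 1

/-- Cesàro averages acting on functions: `Q_n f(x) = (1/n) ∑_{k=1}^n P_k f(x)`. -/
def QfN [MeasurableSpace X] (P : ℕ → X → Measure X) (n : ℕ) (f : X → ℝ) (x : X) : ℝ :=
  (1 / (n : ℝ)) * ∑ k ∈ Finset.Icc 1 n, PfN P k f x

/-- Cesàro averages on sets: `Q_n(x,A) = (1/n) ∑_{k=1}^n P_k(x,A)`. -/
def QsetN [MeasurableSpace X] (P : ℕ → X → Measure X) (n : ℕ) (x : X) (A : Set X) : ℝ≥0∞ :=
  (n : ℝ≥0∞)⁻¹ * ∑ k ∈ Finset.Icc 1 n, P k x A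

/-- Asymptotic stability with unique invariant measure `μs`. -/
def AsympStableN [MeasurableSpace X] [PseudoMetricSpace X] (P : ℕ → X → Measure X)
    (μs : Measure X) : Prop :=
  IsProbabilityMeasure μs ∧ InvariantN P μs ∧
  (∀ ν : Measure X, IsProbabilityMeasure ν → InvariantN P ν → ν = μs) ∧
  ∀ ν : Measure X, IsProbabilityMeasure ν → ∀ f : X → ℝ, Continuous f →
    (∃ C, ∀ x, |f x| ≤ C) →
    Tendsto (fun n => ∫ y, f y ∂ (ν.bind (P n))) atTop (𝓝 (∫ y, f y ∂ μs))

/-! ### Continuous time `T = [0,∞)` -/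

/-- Action on bounded Borel functions, continuous time. -/
def PfR [MeasurableSpace X] (P : ℝ → X → Measure X) (t : ℝ) (f : X → ℝ) (x : X) : ℝ :=
  ∫ y, f y ∂ P t x

/-- A Markov semigroup indexed by `T = [0,∞)`, with `P_0(x,·) = δ_x`. -/
def IsMarkovSemigroupR [MeasurableSpace X] (P : ℝ → X → Measure X) : Prop :=
  (∀ t x, 0 ≤ t → IsProbabilityMeasure (P t x)) ∧
  (∀ (t : ℝ) (A : Set X), 0 ≤ t → MeasurableSet A → Measurable fun x => P t x A) ∧
  (∀ x, P 0 x = Measure.dirac x) ∧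
  ∀ (s t : ℝ) (x : X) (A : Set X), 0 ≤ s → 0 ≤ t → MeasurableSet A →
    P (s + t) x A = ∫⁻ y, P t y A ∂ P s x

/-- Joint time-measurability: `s ↦ P_s(x,A)` is Borel measurable. -/
def TimeMeasR [MeasurableSpace X] (P : ℝ → X → Measure X) : Prop :=
  ∀ (x : X) (A : Set X), MeasurableSet A → Measurable fun s : ℝ => P s x A

/-- The Feller property, continuous time. -/
def FellerR [MeasurableSpace X] [PseudoMetricSpace X] (P : ℝ → X → Measure X) : Prop :=
  ∀ t : ℝ, 0 ≤ t → ∀ f : X → ℝ, Continuous f → (∃ C, ∀ x, |f x| ≤ C) →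
    Continuous (fun x => PfR P t f x) ∧ ∃ C, ∀ x, |PfR P t f x| ≤ C

/-- Strong continuity on `C_b(X)`: `sup_x |P_t f(x) - f(x)| → 0` as `t ↓ 0`. -/
def StrongContR [MeasurableSpace X] [PseudoMetricSpace X] (P : ℝ → X → Measure X) : Prop :=
  ∀ f : X → ℝ, Continuous f → (∃ C, ∀ x, |f x| ≤ C) →
    ∀ ε > 0, ∃ η > 0, ∀ t : ℝ, 0 < t → t < η → ∀ x, |PfR P t f x - f x| < ε

/-- The e-property at a point `z`, continuous time. -/
def EPropR [MeasurableSpace X] [PseudoMetricSpace X] (P : ℝ → X → Measure X) (z : X) : Prop :=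
  ∀ f : X → ℝ, BddLip f → ∀ ε > 0, ∃ δ > 0, ∀ x, dist x z < δ → ∀ t : ℝ, 0 ≤ t →
    |PfR P t f x - PfR P t f z| < ε

/-- The eventual e-property at a point `z`, continuous time. -/
def EventualEPropR [MeasurableSpace X] [PseudoMetricSpace X] (P : ℝ → X → Measure X)
    (z : X) : Prop :=
  ∀ f : X → ℝ, BddLip f → ∀ ε > 0, ∃ δ > 0, ∃ t₀ : ℝ, 0 ≤ t₀ ∧
    ∀ x, dist x z < δ → ∀ t : ℝ, t₀ ≤ t → |PfR P t f x - PfR P t f z| < ε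

/-- Eventual continuity at `z`, continuous time. -/
def EvContR [MeasurableSpace X] [PseudoMetricSpace X] (P : ℝ → X → Measure X) (z : X) : Prop :=
  ∀ f : X → ℝ, BddLip f → ∀ ε > 0, ∃ δ > 0, ∀ x, dist x z < δ →
    Filter.limsup (fun t : ℝ => |PfR P t f x - PfR P t f z|) Filter.atTop ≤ ε

/-- Invariance, continuous time. -/
def InvariantR [MeasurableSpace X] (P : ℝ → X → Measure X) (μ : Measure X) : Prop :=
  ∀ t : ℝ, 0 ≤ t → μ.bind (P t) = μ

/-- Ergodic invariant measure, continuous time. -/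
def ErgodicMeasR [MeasurableSpace X] (P : ℝ → X → Measure X) (μ : Measure X) : Prop :=
  InvariantR P μ ∧
  ∀ A : Set X, MeasurableSet A →
    (∀ t : ℝ, 0 ≤ t → ∀ᵐ x ∂μ, P t x A = A.indicator (fun _ => (1 : ℝ≥0∞)) x) →
    μ A = 0 ∨ μ A = 1

/-- Cesàro averages acting on functions: `Q_t f(x) = (1/t) ∫_0^t P_s f(x) ds`. -/
def QfR [MeasurableSpace X] (P : ℝ → X → Measure X) (t : ℝ) (f : X → ℝ) (x : X) : ℝ :=
  (1 / t) * ∫ s in Set.Ioc (0 : ℝ) t, PfR P s f x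

/-- Cesàro averages on sets: `Q_t(x,A) = (1/t) ∫_0^t P_s(x,A) ds`. -/
def QsetR [MeasurableSpace X] (P : ℝ → X → Measure X) (t : ℝ) (x : X) (A : Set X) : ℝ≥0∞ :=
  ENNReal.ofReal (1 / t) * ∫⁻ s in Set.Ioc (0 : ℝ) t, P s x A

/-- Asymptotic stability, continuous time. -/
def AsympStableR [MeasurableSpace X] [PseudoMetricSpace X] (P : ℝ → X → Measure X)
    (μs : Measure X) : Prop :=
  IsProbabilityMeasure μs ∧ InvariantR P μs ∧
  (∀ ν : Measure X, IsProbabilityMeasure ν → InvariantR P ν → ν = μs) ∧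
  ∀ ν : Measure X, IsProbabilityMeasure ν → ∀ f : X → ℝ, Continuous f →
    (∃ C, ∀ x, |f x| ≤ C) →
    Tendsto (fun t : ℝ => ∫ y, f y ∂ (ν.bind (P t))) atTop (𝓝 (∫ y, f y ∂ μs))

end

/-!
Fix a bounded continuous `f`, put `c = ∫ f dμ*`, and suppose `P_n f x ≥ c + 2ε` for points `x`
arbitrarily close to `z` at arbitrarily late times `n`. Since `P_n f → c` pointwise, Baire's
theorem gives a ball `B(u, t)` inside `Int(supp μ*)` on which `P_n f ≤ c + ε` for all large `n`.

Run the chain from `x` in blocks of times `m₁, m₂, …`, killing after each block the mass inside a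
ball `B(u, sᵢ)`, `t/2 < sᵢ < t`. Since `P_j f ≤ c + ε` wherever mass is killed, the integral of
`P_{n-m₁-…} f - c` against the surviving mass stays `≥ ε`, so at least `ε / 2‖f‖` of mass
survives any number of blocks. Radii with null boundaries make the killed chains weakly
continuous in the starting point at `z` (Feller property), so this holds from `z` as well;
asymptotic stability and `μ*(B(u, t/4)) > 0` then let each `mᵢ` be chosen so that a fixed amount
`γ` of mass is killed from `z`, hence from every `x` near `z`. After more than `1/γ` blocks no
mass is left, a contradiction.

So `P_n f < c + ε` near `z` for all large `n`; applied to `±f`, together with the continuity of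
the finitely many earlier `P_n f`, this is the e-property.
-/

open ProbabilityTheory Set

section Integration

variable {X Y : Type*} [MeasurableSpace X] [MeasurableSpace Y]

lemma integrable_of_abs_le {μ : Measure X} [IsFiniteMeasure μ] {f : X → ℝ}
    (hf : AEStronglyMeasurable f μ) {C : ℝ} (hfC : ∀ y, |f y| ≤ C) : Integrable f μ :=
  .of_bound hf C (.of_forall (by simpa using hfC))

lemma MeasureTheory.Measure.integral_comp {κ : Kernel X Y} {μ : Measure X} {f : Y → ℝ}
    (hf : Integrable f (κ ∘ₘ μ)) : ∫ y, f y ∂(κ ∘ₘ μ) = ∫ x, ∫ y, f y ∂κ x ∂μ := by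
  rw [Measure.comp_eq_comp_const_apply] at hf ⊢
  rw [Kernel.integral_comp hf, Kernel.const_apply]

end Integration

section MarkovSemigroup

variable {X : Type*} [MeasurableSpace X] {P : ℕ → X → Measure X}

lemma IsMarkovSemigroupN.measurable (hP : IsMarkovSemigroupN P) {n : ℕ} (hn : 1 ≤ n) :
    Measurable (P n) :=
  Measure.measurable_of_measurable_coe _ fun _ hA => hP.2.1 n _ hn hA

def IsMarkovSemigroupN.kernel (hP : IsMarkovSemigroupN P) (n : ℕ) (hn : 1 ≤ n) : Kernel X X :=
  ⟨P n, hP.measurable hn⟩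

instance (hP : IsMarkovSemigroupN P) (n : ℕ) (hn : 1 ≤ n) : IsMarkovKernel (hP.kernel n hn) :=
  ⟨fun x => hP.1 n x hn⟩

lemma IsMarkovSemigroupN.bind_eq_comp (hP : IsMarkovSemigroupN P) {n : ℕ} (hn : 1 ≤ n)
    (τ : Measure X) : τ.bind (P n) = hP.kernel n hn ∘ₘ τ :=
  rfl

lemma IsMarkovSemigroupN.bind_apply_univ (hP : IsMarkovSemigroupN P) {n : ℕ} (hn : 1 ≤ n)
    (τ : Measure X) : τ.bind (P n) univ = τ univ := by
  rw [hP.bind_eq_comp hn, Measure.comp_apply_univ]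

lemma IsMarkovSemigroupN.isFiniteMeasure_bind (hP : IsMarkovSemigroupN P) {n : ℕ} (hn : 1 ≤ n)
    (τ : Measure X) [IsFiniteMeasure τ] : IsFiniteMeasure (τ.bind (P n)) := by
  rw [hP.bind_eq_comp hn]
  infer_instance

lemma IsMarkovSemigroupN.add_apply (hP : IsMarkovSemigroupN P) {m n : ℕ} (hm : 1 ≤ m)
    (hn : 1 ≤ n) (x : X) : P (m + n) x = (P m x).bind (P n) :=
  Measure.ext fun A hA => by
    rw [Measure.bind_apply hA (hP.measurable hn).aemeasurable, hP.2.2 m n x A hm hn hA]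

lemma IsMarkovSemigroupN.abs_PfN_le (hP : IsMarkovSemigroupN P) {n : ℕ} (hn : 1 ≤ n)
    {f : X → ℝ} {C : ℝ} (hfC : ∀ y, |f y| ≤ C) (x : X) : |PfN P n f x| ≤ C := by
  have := hP.1 n x hn
  simpa [PfN] using norm_integral_le_of_norm_le_const (μ := P n x) (f := f)
    (.of_forall (by simpa using hfC))

lemma IsMarkovSemigroupN.measurable_PfN (hP : IsMarkovSemigroupN P) {n : ℕ} (hn : 1 ≤ n)
    {f : X → ℝ} (hf : Measurable f) : Measurable (PfN P n f) :=
  (hf.stronglyMeasurable.integral_kernel (κ := hP.kernel n hn)).measurable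

lemma IsMarkovSemigroupN.integral_bind (hP : IsMarkovSemigroupN P) {n : ℕ} (hn : 1 ≤ n)
    (τ : Measure X) [IsFiniteMeasure τ] {f : X → ℝ} (hf : Measurable f) {C : ℝ}
    (hfC : ∀ y, |f y| ≤ C) : ∫ y, f y ∂τ.bind (P n) = ∫ x, PfN P n f x ∂τ := by
  rw [hP.bind_eq_comp hn]
  exact Measure.integral_comp (integrable_of_abs_le hf.aestronglyMeasurable hfC)

lemma IsMarkovSemigroupN.PfN_add (hP : IsMarkovSemigroupN P) {m n : ℕ} (hm : 1 ≤ m)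
    (hn : 1 ≤ n) {f : X → ℝ} (hf : Measurable f) {C : ℝ} (hfC : ∀ y, |f y| ≤ C) (x : X) :
    PfN P (m + n) f x = ∫ y, PfN P n f y ∂P m x := by
  have := hP.1 m x hm
  rw [PfN, hP.add_apply hm hn, hP.integral_bind hn _ hf hfC]

lemma IsMarkovSemigroupN.PfN_sub_const (hP : IsMarkovSemigroupN P) {n : ℕ} (hn : 1 ≤ n)
    {f : X → ℝ} (hf : Measurable f) {C : ℝ} (hfC : ∀ y, |f y| ≤ C) (c : ℝ) (x : X) :
    PfN P n (fun y => f y - c) x = PfN P n f x - c := by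
  have := hP.1 n x hn
  rw [PfN, integral_sub (integrable_of_abs_le hf.aestronglyMeasurable hfC) (integrable_const c),
    integral_const, probReal_univ, one_smul, PfN]

end MarkovSemigroup

section AsymptoticStability

variable {X : Type*} [MetricSpace X] [MeasurableSpace X] {P : ℕ → X → Measure X}
  {μs : Measure X}

lemma AsympStableN.tendsto_PfN (hstab : AsympStableN P μs) (hP : IsMarkovSemigroupN P)
    {f : X → ℝ} (hf : Continuous f) {C : ℝ} (hfC : ∀ y, |f y| ≤ C) (x : X) :
    Tendsto (fun n => PfN P n f x) atTop (𝓝 (∫ y, f y ∂μs)) :=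
  (hstab.2.2.2 (.dirac x) inferInstance f hf ⟨C, hfC⟩).congr' <| by
    filter_upwards [eventually_ge_atTop 1] with n hn
    rw [Measure.dirac_bind (hP.measurable hn), PfN]

lemma AsympStableN.tendsto_integral_bind (hstab : AsympStableN P μs) (τ : Measure X)
    [IsFiniteMeasure τ] {g : X → ℝ} (hg : Continuous g) {C : ℝ} (hgC : ∀ y, |g y| ≤ C) :
    Tendsto (fun n => ∫ y, g y ∂τ.bind (P n)) atTop (𝓝 (τ.real univ * ∫ y, g y ∂μs)) := by
  rcases eq_zero_or_neZero τ with rfl | _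
  · simp [Measure.bind_zero_left]
  have hτ : τ = τ univ • ((τ univ)⁻¹ • τ) := by
    rw [smul_smul, ENNReal.mul_inv_cancel (NeZero.ne _) (measure_ne_top _ _), one_smul]
  have hbind : ∀ n, ∫ y, g y ∂τ.bind (P n)
      = (τ univ).toReal * ∫ y, g y ∂((τ univ)⁻¹ • τ).bind (P n) := fun n => by
    conv_lhs => rw [hτ, Measure.bind_smul, integral_smul_measure, smul_eq_mul]
  simp_rw [hbind, measureReal_def]
  exact (hstab.2.2.2 _ inferInstance g hg ⟨C, hgC⟩).const_mul _

lemma AsympStableN.exists_lt_integral_bind (hstab : AsympStableN P μs) (τ : Measure X)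
    [IsFiniteMeasure τ] {g : X → ℝ} (hg : Continuous g) {C : ℝ} (hgC : ∀ y, |g y| ≤ C)
    {γ : ℝ} (hγ : γ < τ.real univ * ∫ y, g y ∂μs) :
    ∃ m : ℕ+, γ < ∫ y, g y ∂τ.bind (P m) := by
  obtain ⟨n, hn, hn1⟩ := (((hstab.tendsto_integral_bind τ hg hgC).eventually
    (lt_mem_nhds hγ)).and (eventually_ge_atTop 1)).exists
  exact ⟨⟨n, hn1⟩, hn⟩

end AsymptoticStability

section Approximation

variable {X : Type*} [MetricSpace X]

lemma IsOpen.exists_tendsto_indicator {U : Set X} (hU : IsOpen U) {g : X → ℝ}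
    (hg : Continuous g) (hg0 : ∀ y, 0 ≤ g y) :
    ∃ gk : ℕ → X → ℝ, (∀ k, Continuous (gk k)) ∧
      (∀ k y, 0 ≤ gk k y ∧ gk k y ≤ U.indicator g y) ∧
      ∀ y, Tendsto (fun k => gk k y) atTop (𝓝 (U.indicator g y)) := by
  rcases Uᶜ.eq_empty_or_nonempty with hUc | hUc
  · rw [compl_empty_iff.1 hUc, indicator_univ]
    exact ⟨fun _ => g, fun _ => hg, fun _ y => ⟨hg0 y, le_rfl⟩, fun _ => tendsto_const_nhds⟩
  refine ⟨fun k y => g y * min 1 (k * infDist y Uᶜ), fun k => by fun_prop, fun k y => ?_,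
    fun y => ?_⟩
  · by_cases hy : y ∈ U
    · rw [indicator_of_mem hy]
      have : 0 ≤ (k : ℝ) * infDist y Uᶜ := mul_nonneg k.cast_nonneg infDist_nonneg
      exact ⟨mul_nonneg (hg0 y) (le_min zero_le_one this),
        mul_le_of_le_one_right (hg0 y) (min_le_left _ _)⟩
    · simp [indicator_of_notMem hy, infDist_zero_of_mem (mem_compl hy)]
  · by_cases hy : y ∈ U
    · rw [indicator_of_mem hy]
      have hd : 0 < infDist y Uᶜ :=
        (hU.isClosed_compl.notMem_iff_infDist_pos hUc).1 (by simpa using hy)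
      refine tendsto_const_nhds.congr' ?_
      filter_upwards [eventually_ge_atTop ⌈(infDist y Uᶜ)⁻¹⌉₊] with k hk
      rw [min_eq_left, mul_one]
      calc (1 : ℝ) = (infDist y Uᶜ)⁻¹ * infDist y Uᶜ := (inv_mul_cancel₀ hd.ne').symm
        _ ≤ k * infDist y Uᶜ := by gcongr; exact Nat.ceil_le.1 hk
    · simp [indicator_of_notMem hy, infDist_zero_of_mem (mem_compl hy)]

end Approximation

section WeakConvergence

variable {X : Type*} [MetricSpace X] [MeasurableSpace X] {ι : Type*}

def TendstoWeakly (η : ι → Measure X) (l : Filter ι) (η₀ : Measure X) : Prop :=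
  ∀ g : X → ℝ, Continuous g → (∃ C, ∀ y, |g y| ≤ C) →
    Tendsto (fun i => ∫ y, g y ∂η i) l (𝓝 (∫ y, g y ∂η₀))

lemma tendstoWeakly_dirac [BorelSpace X] (z : X) :
    TendstoWeakly (fun x => Measure.dirac x) (𝓝 z) (.dirac z) :=
  fun g hg _ => by simpa only [integral_dirac] using hg.tendsto z

lemma TendstoWeakly.tendsto_measureReal_univ {η : ι → Measure X} {l : Filter ι}
    {η₀ : Measure X} (h : TendstoWeakly η l η₀) :
    Tendsto (fun i => (η i).real univ) l (𝓝 (η₀.real univ)) := by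
  simpa using h (fun _ => 1) continuous_const ⟨1, by simp⟩

variable [BorelSpace X] {η : ι → Measure X} {l : Filter ι} {η₀ : Measure X}
  [∀ i, IsFiniteMeasure (η i)] [IsFiniteMeasure η₀]

lemma TendstoWeakly.eventually_lt_setIntegral_of_isOpen (h : TendstoWeakly η l η₀)
    {U : Set X} (hU : IsOpen U) {g : X → ℝ} (hg : Continuous g) (hg0 : ∀ y, 0 ≤ g y) {C : ℝ}
    (hgC : ∀ y, g y ≤ C) {θ : ℝ} (hθ : θ < ∫ y in U, g y ∂η₀) :
    ∀ᶠ i in l, θ < ∫ y in U, g y ∂η i := by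
  obtain ⟨gk, hgk, hgkU, hlim⟩ := hU.exists_tendsto_indicator hg hg0
  have hgU : ∀ y, |U.indicator g y| ≤ C := fun y => by
    rw [abs_of_nonneg (indicator_nonneg (fun y _ => hg0 y) y)]
    exact (indicator_le_self' fun y _ => hg0 y) y |>.trans (hgC y)
  have hgkC : ∀ k y, |gk k y| ≤ C := fun k y =>
    (abs_of_nonneg (hgkU k y).1).trans_le ((hgkU k y).2.trans (le_of_abs_le (hgU y)))
  have hdom : Tendsto (fun k => ∫ y, gk k y ∂η₀) atTop (𝓝 (∫ y in U, g y ∂η₀)) := by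
    rw [← integral_indicator hU.measurableSet]
    exact tendsto_integral_of_dominated_convergence (fun _ => C)
      (fun k => (hgk k).aestronglyMeasurable) (integrable_const C)
      (fun k => .of_forall fun y => by simpa using hgkC k y) (.of_forall hlim)
  obtain ⟨k, hk⟩ := (hdom.eventually (lt_mem_nhds hθ)).exists
  filter_upwards [(h (gk k) (hgk k) ⟨C, hgkC k⟩).eventually (lt_mem_nhds hk)] with i hi
  calc θ < ∫ y, gk k y ∂η i := hi
    _ ≤ ∫ y, U.indicator g y ∂η i :=
      integral_mono (integrable_of_abs_le (hgk k).aestronglyMeasurable (hgkC k))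
        (integrable_of_abs_le (hg.aestronglyMeasurable.indicator hU.measurableSet) hgU)
        fun y => (hgkU k y).2
    _ = ∫ y in U, g y ∂η i := integral_indicator hU.measurableSet

lemma TendstoWeakly.tendsto_setIntegral_of_nonneg (h : TendstoWeakly η l η₀) {E : Set X}
    (hE : MeasurableSet E) (hE₀ : η₀ (frontier E) = 0) {g : X → ℝ} (hg : Continuous g)
    (hg0 : ∀ y, 0 ≤ g y) {C : ℝ} (hgC : ∀ y, g y ≤ C) :
    Tendsto (fun i => ∫ y in E, g y ∂η i) l (𝓝 (∫ y in E, g y ∂η₀)) := by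
  have hgC' : ∀ y, |g y| ≤ C := fun y => (abs_of_nonneg (hg0 y)).trans_le (hgC y)
  have hint (μ : Measure X) [IsFiniteMeasure μ] : Integrable g μ :=
    integrable_of_abs_le hg.aestronglyMeasurable hgC'
  have hsplit (μ : Measure X) [IsFiniteMeasure μ] :
      ∫ y in E, g y ∂μ = ∫ y, g y ∂μ - ∫ y in Eᶜ, g y ∂μ := by
    linarith [integral_add_compl hE (hint μ)]
  have hmono (μ : Measure X) [IsFiniteMeasure μ] (F : Set X) :
      ∫ y in interior F, g y ∂μ ≤ ∫ y in F, g y ∂μ :=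
    setIntegral_mono_set (hint μ).integrableOn (.of_forall hg0) (.of_forall interior_subset)
  have hint₀ (F : Set X) (hF : η₀ (frontier F) = 0) :
      ∫ y in interior F, g y ∂η₀ = ∫ y in F, g y ∂η₀ :=
    setIntegral_congr_set (interior_ae_eq_of_null_frontier hF)
  refine tendsto_order.2 ⟨fun θ hθ => ?_, fun θ hθ => ?_⟩
  · rw [← hint₀ E hE₀] at hθ
    filter_upwards [h.eventually_lt_setIntegral_of_isOpen isOpen_interior hg hg0 hgC hθ]
      with i hi
    exact hi.trans_le (hmono _ E)
  · rw [hsplit] at hθ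
    set δ := (θ - (∫ y, g y ∂η₀ - ∫ y in Eᶜ, g y ∂η₀)) / 2 with hδ
    have hδ0 : 0 < δ := half_pos (sub_pos.2 hθ)
    have hEc := hint₀ Eᶜ (by rwa [frontier_compl])
    filter_upwards [(h g hg ⟨C, hgC'⟩).eventually (gt_mem_nhds (lt_add_of_pos_right _ hδ0)),
      h.eventually_lt_setIntegral_of_isOpen isOpen_interior hg hg0 hgC
        (sub_lt_self (∫ y in interior Eᶜ, g y ∂η₀) hδ0)] with i h₁ h₂
    rw [hsplit]
    linarith [hmono (η i) Eᶜ]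

lemma TendstoWeakly.restrict (h : TendstoWeakly η l η₀) {E : Set X} (hE : MeasurableSet E)
    (hE₀ : η₀ (frontier E) = 0) :
    TendstoWeakly (fun i => (η i).restrict E) l (η₀.restrict E) := by
  rintro g hg ⟨C, hgC⟩
  have hg0 : ∀ y, 0 ≤ g y + |C| := fun y => by
    linarith [(abs_le.1 (hgC y)).1, le_abs_self C]
  have hgC' : ∀ y, g y + |C| ≤ 2 * |C| := fun y => by
    linarith [(abs_le.1 (hgC y)).2, le_abs_self C]
  have hshift (μ : Measure X) [IsFiniteMeasure μ] :
      ∫ y in E, g y ∂μ = ∫ y in E, (g y + |C|) ∂μ - ∫ _ in E, |C| ∂μ := by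
    rw [integral_add (integrable_of_abs_le hg.aestronglyMeasurable hgC).integrableOn
      (integrable_const _).integrableOn]
    ring
  rw [hshift]
  refine .congr (fun i => (hshift (η i)).symm) <|
    (h.tendsto_setIntegral_of_nonneg hE hE₀ (by fun_prop) hg0 hgC').sub
      (h.tendsto_setIntegral_of_nonneg hE hE₀ continuous_const (fun _ => abs_nonneg C)
        fun _ => le_rfl)

lemma FellerN.tendstoWeakly_bind (hFeller : FellerN P) (hP : IsMarkovSemigroupN P) {n : ℕ}
    (hn : 1 ≤ n) {ι : Type*} {τ : ι → Measure X} {l : Filter ι} {τ₀ : Measure X}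
    [∀ i, IsFiniteMeasure (τ i)] [IsFiniteMeasure τ₀] (h : TendstoWeakly τ l τ₀) :
    TendstoWeakly (fun i => (τ i).bind (P n)) l (τ₀.bind (P n)) := by
  rintro g hg ⟨C, hgC⟩
  simp_rw [hP.integral_bind hn _ hg.measurable hgC]
  exact h _ (hFeller n hn g hg ⟨C, hgC⟩).1 ⟨C, hP.abs_PfN_le hn hgC⟩

end WeakConvergence

section Topology

variable {X : Type*} [MetricSpace X]

lemma exists_ball_subset_forall_abs_sub_le [CompleteSpace X] {φ : ℕ → X → ℝ}
    (hφ : ∀ j, Continuous (φ j)) {c : ℝ} (hlim : ∀ x, Tendsto (fun j => φ j x) atTop (𝓝 c))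
    {ε : ℝ} (hε : 0 < ε) {V : Set X} (hV : IsOpen V) (hVne : V.Nonempty) :
    ∃ u t N, 0 < t ∧ ball u t ⊆ V ∧ ∀ y ∈ ball u t, ∀ j ≥ N, |φ j y - c| ≤ ε := by
  set E : ℕ → Set X := fun m => ⋂ j ≥ m, φ j ⁻¹' closedBall c ε
  have hE : ∀ m, IsClosed (E m) := fun m =>
    isClosed_biInter fun j _ => isClosed_closedBall.preimage (hφ j)
  have hcover : ⋃ m, E m = univ := eq_univ_of_forall fun x => by
    obtain ⟨m, hm⟩ := eventually_atTop.1 ((hlim x).eventually (closedBall_mem_nhds c hε))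
    exact mem_iUnion.2 ⟨m, mem_iInter₂.2 hm⟩
  obtain ⟨w, hwV, hwE⟩ :=
    (dense_iUnion_interior_of_closed hE hcover).inter_open_nonempty V hV hVne
  obtain ⟨m, hwm⟩ := mem_iUnion.1 hwE
  obtain ⟨t, ht, hball⟩ := Metric.isOpen_iff.1 (isOpen_interior.inter hV) w ⟨hwm, hwV⟩
  refine ⟨w, t, m, ht, fun y hy => (hball hy).2, fun y hy j hj => ?_⟩
  simpa [E, Real.dist_eq] using mem_iInter₂.1 (interior_subset (hball hy).1) j hj

lemma exists_continuous_indicator_ball_le_le (u : X) {r₁ r₂ : ℝ} (hr : r₁ < r₂) :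
    ∃ g : X → ℝ, Continuous g ∧ (∀ y, |g y| ≤ 1) ∧
      (∀ y, (ball u r₁).indicator 1 y ≤ g y) ∧ ∀ y, g y ≤ (ball u r₂).indicator 1 y := by
  obtain ⟨g, hg0, hg1, hg01⟩ := exists_continuous_zero_one_of_isClosed
    (isOpen_ball (x := u) (ε := r₂)).isClosed_compl (isClosed_closedBall (x := u) (ε := r₁))
    (disjoint_compl_left_iff_subset.2 (closedBall_subset_ball hr))
  refine ⟨g, g.continuous, fun y => abs_le.2 ⟨by linarith [(hg01 y).1], (hg01 y).2⟩,
    fun y => ?_, fun y => ?_⟩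
  · by_cases hy : y ∈ ball u r₁
    · simp [indicator_of_mem hy, hg1 (ball_subset_closedBall hy)]
    · simp [indicator_of_notMem hy, (hg01 y).1]
  · by_cases hy : y ∈ ball u r₂
    · simp [indicator_of_mem hy, (hg01 y).2]
    · simp [indicator_of_notMem hy, hg0 hy]

end Topology

section KilledChain

variable {X : Type*} [MetricSpace X] [MeasurableSpace X] {P : ℕ → X → Measure X}

variable (P) in
noncomputable def killStep (u : X) (a : ℕ+ × ℝ) (τ : Measure X) : Measure X :=
  (τ.bind (P a.1)).restrict (ball u a.2)ᶜ

variable (P) in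
/-- The head of `l` is the most recent step. -/
noncomputable def killedChain (u x : X) (l : List (ℕ+ × ℝ)) : Measure X :=
  l.foldr (killStep P u) (.dirac x)

def totalTime (l : List (ℕ+ × ℝ)) : ℕ :=
  (l.map fun a => (a.1 : ℕ)).sum

variable {u : X}

@[simp]
lemma killedChain_nil (x : X) : killedChain P u x [] = .dirac x :=
  rfl

@[simp]
lemma killedChain_cons (x : X) (a : ℕ+ × ℝ) (l : List (ℕ+ × ℝ)) :
    killedChain P u x (a :: l) = killStep P u a (killedChain P u x l) :=
  rfl

@[simp]
lemma totalTime_cons (a : ℕ+ × ℝ) (l : List (ℕ+ × ℝ)) :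
    totalTime (a :: l) = a.1 + totalTime l := by
  simp [totalTime]

lemma IsMarkovSemigroupN.killedChain_apply_univ_le_one (hP : IsMarkovSemigroupN P) (x : X)
    (l : List (ℕ+ × ℝ)) : killedChain P u x l univ ≤ 1 := by
  induction l with
  | nil => simp
  | cons a l ih =>
    calc killStep P u a (killedChain P u x l) univ
        ≤ (killedChain P u x l).bind (P a.1) univ := by
          rw [killStep, Measure.restrict_apply_univ]
          exact measure_mono (subset_univ _)
      _ ≤ 1 := by rwa [hP.bind_apply_univ a.1.pos]

lemma IsMarkovSemigroupN.isFiniteMeasure_killedChain (hP : IsMarkovSemigroupN P) (x : X)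
    (l : List (ℕ+ × ℝ)) : IsFiniteMeasure (killedChain P u x l) :=
  ⟨(hP.killedChain_apply_univ_le_one x l).trans_lt one_lt_top⟩

variable [BorelSpace X]

lemma IsMarkovSemigroupN.measureReal_killStep (hP : IsMarkovSemigroupN P) (m : ℕ+) (s : ℝ)
    (τ : Measure X) [IsFiniteMeasure τ] :
    (killStep P u (m, s) τ).real univ = τ.real univ - (τ.bind (P m)).real (ball u s) := by
  have := hP.isFiniteMeasure_bind m.pos τ
  rw [killStep, measureReal_restrict_apply_univ, measureReal_compl measurableSet_ball,
    measureReal_def, measureReal_def, hP.bind_apply_univ m.pos]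
  rfl

lemma TendstoWeakly.killStep (hP : IsMarkovSemigroupN P) (hFeller : FellerN P) {ι : Type*}
    {τ : ι → Measure X} {l : Filter ι} {τ₀ : Measure X} [∀ i, IsFiniteMeasure (τ i)]
    [IsFiniteMeasure τ₀] (h : TendstoWeakly τ l τ₀) {m : ℕ+} {s : ℝ}
    (hs : τ₀.bind (P m) (frontier (ball u s)) = 0) :
    TendstoWeakly (fun i => killStep P u (m, s) (τ i)) l (killStep P u (m, s) τ₀) := by
  have := hP.isFiniteMeasure_bind m.pos τ₀
  have := fun i => hP.isFiniteMeasure_bind m.pos (τ i)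
  exact (hFeller.tendstoWeakly_bind hP m.pos h).restrict measurableSet_ball.compl
    (by rwa [frontier_compl])

end KilledChain

section Defect

variable {X : Type*} [MetricSpace X] [MeasurableSpace X] [BorelSpace X]
  {P : ℕ → X → Measure X} {u : X}

lemma IsMarkovSemigroupN.integral_killedChain_ge (hP : IsMarkovSemigroupN P) {f : X → ℝ}
    (hf : Measurable f) {C : ℝ} (hfC : ∀ y, |f y| ≤ C) {t ε : ℝ} {N : ℕ} (hN : 1 ≤ N)
    (hball : ∀ y ∈ ball u t, ∀ j ≥ N, PfN P j f y ≤ ε) (x : X) (n : ℕ)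
    (l : List (ℕ+ × ℝ)) (hl : ∀ a ∈ l, a.2 ≤ t) (hn : totalTime l + N ≤ n) :
    PfN P n f x - ε * (1 - (killedChain P u x l).real univ)
      ≤ ∫ y, PfN P (n - totalTime l) f y ∂killedChain P u x l := by
  induction l with
  | nil => simp [integral_dirac, totalTime]
  | cons a l ih =>
    obtain ⟨m, s⟩ := a
    simp only [List.forall_mem_cons] at hl
    simp only [totalTime_cons] at hn ⊢
    have ih := ih hl.2 (by omega)
    set j := n - (m + totalTime l)
    have hj : n - totalTime l = m + j := by omega
    have hj1 : 1 ≤ j := by omega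
    set τ := killedChain P u x l
    have := hP.isFiniteMeasure_killedChain (u := u) x l
    have := hP.isFiniteMeasure_bind m.pos τ
    have hPj : Measurable (PfN P j f) := hP.measurable_PfN hj1 hf
    have hPjC := hP.abs_PfN_le hj1 hfC
    have hint : Integrable (PfN P j f) (τ.bind (P m)) :=
      integrable_of_abs_le hPj.aestronglyMeasurable hPjC
    have hτ : ∫ y, PfN P (n - totalTime l) f y ∂τ = ∫ y, PfN P j f y ∂τ.bind (P m) := by
      rw [hP.integral_bind m.pos τ hPj hPjC, hj]
      exact integral_congr_ae (.of_forall fun y => hP.PfN_add m.pos hj1 hf hfC y)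
    have hsplit := integral_add_compl measurableSet_ball hint (s := ball u s)
    have hkilled : ∫ y in ball u s, PfN P j f y ∂τ.bind (P m)
        ≤ ε * (τ.bind (P m)).real (ball u s) := by
      refine (setIntegral_mono_on hint.integrableOn (integrable_const ε).integrableOn
        measurableSet_ball fun y hy => hball y (ball_subset_ball hl.1 hy) j (by omega)).trans ?_
      rw [setIntegral_const, smul_eq_mul, mul_comm]
    have hrestrict : ∫ y, PfN P j f y ∂killStep P u (m, s) τ
        = ∫ y in (ball u s)ᶜ, PfN P j f y ∂τ.bind (P m) := rfl
    rw [killedChain_cons, hP.measureReal_killStep]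
    linarith

lemma IsMarkovSemigroupN.killedChain_real_ge_of_defect (hP : IsMarkovSemigroupN P)
    {f : X → ℝ} (hf : Measurable f) {C : ℝ} (hfC : ∀ y, |f y| ≤ C) {t ε : ℝ} (hε : 0 ≤ ε)
    {N : ℕ} (hN : 1 ≤ N) (hball : ∀ y ∈ ball u t, ∀ j ≥ N, PfN P j f y ≤ ε) {x : X} {n : ℕ}
    {l : List (ℕ+ × ℝ)} (hl : ∀ a ∈ l, a.2 ≤ t) (hn : totalTime l + N ≤ n)
    (hdef : 2 * ε ≤ PfN P n f x) : ε ≤ C * (killedChain P u x l).real univ := by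
  have := hP.isFiniteMeasure_killedChain (u := u) x l
  have hge := hP.integral_killedChain_ge hf hfC hN hball x n l hl hn
  have hle : ∫ y, PfN P (n - totalTime l) f y ∂killedChain P u x l
      ≤ C * (killedChain P u x l).real univ :=
    (le_abs_self _).trans <| by
      simpa using norm_integral_le_of_norm_le_const (μ := killedChain P u x l)
        (f := PfN P (n - totalTime l) f) (C := C)
        (.of_forall fun y => by simpa using hP.abs_PfN_le (by omega) hfC y)
  nlinarith [mul_nonneg hε (measureReal_nonneg (μ := killedChain P u x l) (s := univ))]

lemma IsMarkovSemigroupN.killedChain_real_ge_of_frequently (hP : IsMarkovSemigroupN P)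
    {f : X → ℝ} (hf : Measurable f) {C : ℝ} (hfC : ∀ y, |f y| ≤ C) {t ε : ℝ} (hε : 0 ≤ ε)
    {N : ℕ} (hN : 1 ≤ N) (hball : ∀ y ∈ ball u t, ∀ j ≥ N, PfN P j f y ≤ ε) {z : X}
    {l : List (ℕ+ × ℝ)} (hl : ∀ a ∈ l, a.2 ≤ t)
    (hW : TendstoWeakly (fun x => killedChain P u x l) (𝓝 z) (killedChain P u z l))
    (H : ∀ n₀, ∃ᶠ x in 𝓝 z, ∃ n ≥ n₀, 2 * ε ≤ PfN P n f x) :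
    ε ≤ C * (killedChain P u z l).real univ :=
  ge_of_tendsto_of_frequently (hW.tendsto_measureReal_univ.const_mul C) <|
    (H (totalTime l + N)).mono fun _ ⟨_, hn, hdef⟩ =>
      hP.killedChain_real_ge_of_defect hf hfC hε hN hball hl hn hdef

end Defect

section Main

variable {X : Type*} [MetricSpace X] [MeasurableSpace X] [BorelSpace X]
  {P : ℕ → X → Measure X} {μs : Measure X}

lemma IsMarkovSemigroupN.exists_killedChain_real_le (hP : IsMarkovSemigroupN P)
    (hFeller : FellerN P) {u z : X} {r₁ r₂ : ℝ} (hr : r₁ < r₂) {g : X → ℝ} (hg : Continuous g)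
    {C : ℝ} (hgC : ∀ y, |g y| ≤ C) (hgu : ∀ y, g y ≤ (ball u r₁).indicator 1 y) {γ : ℝ}
    (hentry : ∀ l : List (ℕ+ × ℝ), (∀ a ∈ l, a.2 < r₂) →
      TendstoWeakly (fun x => killedChain P u x l) (𝓝 z) (killedChain P u z l) →
      ∃ m : ℕ+, γ < ∫ y, g y ∂(killedChain P u z l).bind (P m))
    (R : ℕ) :
    ∃ l : List (ℕ+ × ℝ), (∀ a ∈ l, a.2 < r₂) ∧
      TendstoWeakly (fun x => killedChain P u x l) (𝓝 z) (killedChain P u z l) ∧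
      ∀ᶠ x in 𝓝 z, (killedChain P u x l).real univ ≤ 1 - R * γ := by
  induction R with
  | zero => exact ⟨[], by simp, tendstoWeakly_dirac z, .of_forall fun x => by simp⟩
  | succ R ih =>
    obtain ⟨l, hl, hW, hmass⟩ := ih
    obtain ⟨m, hm⟩ := hentry l hl hW
    have := fun x => hP.isFiniteMeasure_killedChain (u := u) x l
    have := hP.isFiniteMeasure_bind m.pos (killedChain P u z l)
    obtain ⟨s, ⟨hs₁, hs₂⟩, hs⟩ :=
      exists_null_frontier_thickening ((killedChain P u z l).bind (P m)) {u} hr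
    rw [thickening_singleton] at hs
    refine ⟨(m, s) :: l, List.forall_mem_cons.2 ⟨hs₂, hl⟩, hW.killStep hP hFeller hs, ?_⟩
    filter_upwards [hmass, ((hFeller.tendstoWeakly_bind hP m.pos hW) g hg ⟨C, hgC⟩).eventually
      (lt_mem_nhds hm)] with x hx hgx
    have := hP.isFiniteMeasure_bind m.pos (killedChain P u x l)
    have hkilled : ∫ y, g y ∂(killedChain P u x l).bind (P m)
        ≤ ((killedChain P u x l).bind (P m)).real (ball u s) := by
      rw [← integral_indicator_one measurableSet_ball]
      exact integral_mono (integrable_of_abs_le hg.aestronglyMeasurable hgC)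
        ((integrable_const 1).indicator measurableSet_ball) fun y =>
          (hgu y).trans (indicator_le_indicator_of_subset (ball_subset_ball hs₁.le)
            (fun _ => zero_le_one) y)
    rw [killedChain_cons, hP.measureReal_killStep]
    push_cast
    linarith

theorem IsMarkovSemigroupN.not_frequently_defect (hP : IsMarkovSemigroupN P)
    (hFeller : FellerN P) (hstab : AsympStableN P μs) {u : X} (hu : u ∈ msupp μs) {t : ℝ}
    (ht : 0 < t) {f : X → ℝ} (hf : Measurable f) {C : ℝ} (hC : 0 < C) (hfC : ∀ y, |f y| ≤ C)
    {ε : ℝ} (hε : 0 < ε) {N : ℕ} (hN : 1 ≤ N) (hball : ∀ y ∈ ball u t, ∀ j ≥ N, PfN P j f y ≤ ε)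
    (z : X) : ¬ ∀ n₀, ∃ᶠ x in 𝓝 z, ∃ n ≥ n₀, 2 * ε ≤ PfN P n f x := by
  intro H
  have := hstab.1
  obtain ⟨g, hg, hg1, hgind, hgu⟩ := exists_continuous_indicator_ball_le_le u
    (by linarith : t / 4 < t / 2)
  set a := μs.real (ball u (t / 4))
  have ha : 0 < a := ENNReal.toReal_pos (hu _ (by positivity)).ne' (measure_ne_top _ _)
  have hga : a ≤ ∫ y, g y ∂μs :=
    (integral_indicator_one measurableSet_ball).symm.trans_le <|
      integral_mono ((integrable_const 1).indicator measurableSet_ball)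
        (integrable_of_abs_le hg.aestronglyMeasurable hg1) hgind
  -- `2γ` is the mass `ε / C` kept by chains from `z` times the `μs`-mass `a` of `ball u (t / 4)`.
  set γ := ε * a / (2 * C)
  have hγ : 0 < γ := by positivity
  have hentry : ∀ l : List (ℕ+ × ℝ), (∀ a ∈ l, a.2 < t) →
      TendstoWeakly (fun x => killedChain P u x l) (𝓝 z) (killedChain P u z l) →
      ∃ m : ℕ+, γ < ∫ y, g y ∂(killedChain P u z l).bind (P m) := by
    intro l hl hW
    have := hP.isFiniteMeasure_killedChain (u := u) z l
    have hmass := hP.killedChain_real_ge_of_frequently hf hfC hε.le hN hball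
      (fun a ha => (hl a ha).le) hW H
    refine hstab.exists_lt_integral_bind _ hg hg1 ?_
    have h0 := measureReal_nonneg (μ := killedChain P u z l) (s := univ)
    calc γ < ε * a / C := div_lt_div_of_pos_left (by positivity) hC (by linarith)
      _ ≤ (killedChain P u z l).real univ * a := by
          rw [div_le_iff₀ hC]
          nlinarith
      _ ≤ _ := mul_le_mul_of_nonneg_left hga h0
  obtain ⟨l, -, -, hl⟩ := hP.exists_killedChain_real_le hFeller (by linarith : t / 2 < t) hg hg1
    hgu hentry (⌈γ⁻¹⌉₊ + 1)
  obtain ⟨x, hx⟩ := hl.exists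
  have hR : 1 < ((⌈γ⁻¹⌉₊ + 1 : ℕ) : ℝ) * γ := by
    push_cast
    nlinarith [Nat.le_ceil γ⁻¹, inv_mul_cancel₀ hγ.ne']
  linarith [measureReal_nonneg (μ := killedChain P u x l) (s := univ)]

theorem exists_eventually_PfN_lt [CompleteSpace X] (hP : IsMarkovSemigroupN P)
    (hFeller : FellerN P) (hstab : AsympStableN P μs) (hint : (interior (msupp μs)).Nonempty)
    (z : X) {f : X → ℝ} (hf : Continuous f) {C : ℝ} (hfC : ∀ y, |f y| ≤ C) {ε : ℝ}
    (hε : 0 < ε) :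
    ∃ n₀, ∀ᶠ x in 𝓝 z, ∀ n ≥ n₀, PfN P n f x < ∫ y, f y ∂μs + ε := by
  wlog hC : 0 < C generalizing C
  · exact this (fun y => (hfC y).trans (le_add_of_nonneg_right zero_le_one))
      (by linarith [(abs_nonneg (f z)).trans (hfC z)])
  by_contra! H
  have := hstab.1
  set c := ∫ y, f y ∂μs
  have hc : |c| ≤ C := by
    simpa using norm_integral_le_of_norm_le_const (μ := μs) (f := f) (C := C)
      (.of_forall fun y => by simpa using hfC y)
  have hPf' : ∀ n ≥ 1, ∀ x, PfN P n (fun y => f y - c) x = PfN P n f x - c :=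
    fun n hn => hP.PfN_sub_const hn hf.measurable hfC c
  obtain ⟨u, t, N, ht, hsub, hN⟩ := exists_ball_subset_forall_abs_sub_le
    (fun j => (hFeller (j + 1) (by omega) f hf ⟨C, hfC⟩).1)
    (fun x => (hstab.tendsto_PfN hP hf hfC x).comp (tendsto_add_atTop_nat 1)) (half_pos hε)
    isOpen_interior hint
  refine hP.not_frequently_defect hFeller hstab (interior_subset (hsub (mem_ball_self ht))) ht
    (hf.measurable.sub_const c) (by positivity : 0 < 2 * C)
    (fun y => (abs_sub _ _).trans (by linarith [hfC y])) (half_pos hε) (by omega : 1 ≤ N + 1)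
    (fun y hy j hj => ?_) z fun n₀ => (H (max n₀ 1)).mono fun x ⟨n, hn, hx⟩ =>
      ⟨n, le_of_max_le_left hn, by rw [hPf' n (le_of_max_le_right hn)]; linarith⟩
  obtain ⟨k, rfl⟩ : ∃ k, j = k + 1 := ⟨j - 1, by omega⟩
  rw [hPf' _ (by omega)]
  exact le_of_abs_le (hN y hy k (by omega))

theorem exists_eventually_abs_PfN_sub_lt [CompleteSpace X] (hP : IsMarkovSemigroupN P)
    (hFeller : FellerN P) (hstab : AsympStableN P μs) (hint : (interior (msupp μs)).Nonempty)
    (z : X) {f : X → ℝ} (hf : Continuous f) {C : ℝ} (hfC : ∀ y, |f y| ≤ C) {ε : ℝ}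
    (hε : 0 < ε) :
    ∃ n₀, ∀ᶠ x in 𝓝 z, ∀ n ≥ n₀, |PfN P n f x - ∫ y, f y ∂μs| < ε := by
  obtain ⟨n₁, h₁⟩ := exists_eventually_PfN_lt hP hFeller hstab hint z hf hfC hε
  obtain ⟨n₂, h₂⟩ := exists_eventually_PfN_lt hP hFeller hstab hint z hf.neg
    (fun y => (abs_neg (f y)).trans_le (hfC y)) hε
  refine ⟨max n₁ n₂, ?_⟩
  filter_upwards [h₁, h₂] with x h₁ h₂ n hn
  have h₂ : -PfN P n f x < -∫ y, f y ∂μs + ε := by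
    simpa only [PfN, Pi.neg_apply, integral_neg] using h₂ n (le_of_max_le_right hn)
  exact abs_sub_lt_iff.2 ⟨by linarith [h₁ n (le_of_max_le_left hn)], by linarith⟩

end Main

theorem stmt15_general {X : Type*} [MetricSpace X] [CompleteSpace X]
    [MeasurableSpace X] [BorelSpace X]
    (P : ℕ → X → Measure X) (hP : IsMarkovSemigroupN P) (hFeller : FellerN P)
    (μs : Measure X) (hstab : AsympStableN P μs)
    (hint : (interior (msupp μs)).Nonempty) :
    ∀ z : X, EPropN P z := by
  rintro z f ⟨⟨K, hK⟩, C, hfC⟩ ε hε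
  obtain ⟨n₀, hlate⟩ := exists_eventually_abs_PfN_sub_lt hP hFeller hstab hint z hK.continuous
    hfC (half_pos hε)
  have hearly : ∀ᶠ x in 𝓝 z, ∀ n ∈ Finset.Icc 1 n₀, |PfN P n f x - PfN P n f z| < ε :=
    (Finset.eventually_all _).2 fun n hn => by
      simpa [Real.dist_eq] using Metric.tendsto_nhds.1
        ((hFeller n (Finset.mem_Icc.1 hn).1 f hK.continuous ⟨C, hfC⟩).1.tendsto z) ε hε
  obtain ⟨δ, hδ, hball⟩ := Metric.eventually_nhds_iff.1 (hlate.and hearly)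
  refine ⟨δ, hδ, fun x hx n hn => ?_⟩
  rcases le_or_gt n n₀ with h | h
  · exact (hball hx).2 n (Finset.mem_Icc.2 ⟨hn, h⟩)
  · have hx := (hball hx).1 n h.le
    have hz := hlate.self_of_nhds n h.le
    rw [abs_sub_lt_iff] at hx hz ⊢
    constructor <;> linarith

/-- for `T = ℕ₊`, a Feller, asymptotically stable Markov semigroup whose
unique invariant measure `μ*` has support with nonempty interior satisfies the
e-property at every point of `X`. -/
theorem stmt15 {X : Type*} [MetricSpace X] [CompleteSpace X]
    [TopologicalSpace.SeparableSpace X] [MeasurableSpace X] [BorelSpace X]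
    (P : ℕ → X → Measure X) (hP : IsMarkovSemigroupN P) (hFeller : FellerN P)
    (μs : Measure X) (hstab : AsympStableN P μs)
    (hint : (interior (msupp μs)).Nonempty) :
    ∀ z : X, EPropN P z :=
  stmt15_general P hP hFeller μs hstab hint
end

section
/- Let {P_t}_{t∈T} be a Markov semigroup on a Polish space (X, ρ) with T = [0,∞) which is Feller, strongly continuous on C_b(X), and asymptotically stable with unique invariant measure μ*. If Int(supp μ*) ≠ ∅, then {P_t} satisfies the e-property at every point of X. -/
open MeasureTheory Filter Topology Metric ENNReal
open scoped Classical

/-!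
Let `c = ∫ f dμ*`. By asymptotic stability `P_t f → c` pointwise, and the point is to make this
convergence locally uniform: every `a > 0` should bound `|P_t f - c|` for large `t` on a
neighbourhood of every point. Baire's theorem, applied to the closed sets
`{x | |P_s f x - P_t f x| ≤ a for all s, t ≥ N}`, gives this on a dense open set `U_a`.
Let `S` be the infimum of the bounds that hold near every point and suppose `S > 0`. Pick a
ball `B` with `3B ⊆ U_{S/2} ∩ Int(supp μ*)`. Since `|P_{m+s} f - c| ≤ P_m |P_s f - c|`, any
continuous `h` that locally eventually dominates `|P_s f - c|` yields the bound `P_m h(x) + σ`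
near `x`; taking `h = a - (a - S/2) g` with `g` a bump on `B` and `m` large, so that
`P_m g(x) ≈ ∫ g dμ* ≥ μ*(B) > 0`, improves every bound `a > S` to about
`a - (S/2) μ*(B)`, contradicting the choice of `S`. On bounded time intervals the e-property
follows from the Feller property at finitely many grid times and strong continuity.
-/

open Set ProbabilityTheory

lemma abs_integral_le_of_abs_le {X : Type*} [MeasurableSpace X] {ν : Measure X}
    [IsProbabilityMeasure ν] {g : X → ℝ} {C : ℝ} (hgb : ∀ y, |g y| ≤ C) :
    |∫ y, g y ∂ν| ≤ C := by
  simpa using norm_integral_le_of_norm_le_const (μ := ν)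
    (.of_forall fun y => (Real.norm_eq_abs (g y)).trans_le (hgb y))

namespace IsMarkovSemigroupR

variable {X : Type*} [MeasurableSpace X] {P : ℝ → X → Measure X} {t s : ℝ} {g φ : X → ℝ}
  {C C' : ℝ}

lemma isProbabilityMeasure (hP : IsMarkovSemigroupR P) (ht : 0 ≤ t) (x : X) :
    IsProbabilityMeasure (P t x) :=
  hP.1 t x ht

lemma measurable (hP : IsMarkovSemigroupR P) (ht : 0 ≤ t) : Measurable (P t) :=
  Measure.measurable_of_measurable_coe _ fun _ hA => hP.2.1 t _ ht hA

def kernel (hP : IsMarkovSemigroupR P) (ht : 0 ≤ t) : Kernel X X :=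
  ⟨P t, hP.measurable ht⟩

lemma kernel_comp (hP : IsMarkovSemigroupR P) (hs : 0 ≤ s) (ht : 0 ≤ t) (x : X) :
    (hP.kernel ht ∘ₖ hP.kernel hs) x = P (s + t) x := by
  ext A hA
  rw [Kernel.comp_apply' _ _ _ hA]
  exact (hP.2.2.2 s t x A hs ht hA).symm

lemma integrable (hP : IsMarkovSemigroupR P) (ht : 0 ≤ t) (x : X) (hg : Measurable g)
    (hgb : ∀ y, |g y| ≤ C) : Integrable g (P t x) := by
  have := hP.isProbabilityMeasure ht x
  exact .of_bound hg.aestronglyMeasurable C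
    (.of_forall fun y => (Real.norm_eq_abs _).trans_le (hgb y))

lemma abs_PfR_le (hP : IsMarkovSemigroupR P) (ht : 0 ≤ t) (hgb : ∀ y, |g y| ≤ C) (x : X) :
    |PfR P t g x| ≤ C := by
  have := hP.isProbabilityMeasure ht x
  exact abs_integral_le_of_abs_le hgb

lemma PfR_const (hP : IsMarkovSemigroupR P) (ht : 0 ≤ t) (c : ℝ) (x : X) :
    PfR P t (fun _ => c) x = c := by
  have := hP.isProbabilityMeasure ht x
  simp [PfR]

lemma PfR_zero [MeasurableSingletonClass X] (hP : IsMarkovSemigroupR P) (x : X) :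
    PfR P 0 g x = g x := by
  simp [PfR, hP.2.2.1 x]

lemma PfR_sub (hP : IsMarkovSemigroupR P) (ht : 0 ≤ t) (hg : Measurable g) (hφ : Measurable φ)
    (hgb : ∀ y, |g y| ≤ C) (hφb : ∀ y, |φ y| ≤ C') (x : X) :
    PfR P t g x - PfR P t φ x = PfR P t (fun y => g y - φ y) x :=
  (integral_sub (hP.integrable ht x hg hgb) (hP.integrable ht x hφ hφb)).symm

lemma PfR_mono (hP : IsMarkovSemigroupR P) (ht : 0 ≤ t) (hg : Measurable g) (hφ : Measurable φ)
    (hgb : ∀ y, |g y| ≤ C) (hφb : ∀ y, |φ y| ≤ C') (hle : ∀ y, g y ≤ φ y) (x : X) :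
    PfR P t g x ≤ PfR P t φ x :=
  integral_mono (hP.integrable ht x hg hgb) (hP.integrable ht x hφ hφb) hle

lemma PfR_add (hP : IsMarkovSemigroupR P) (hs : 0 ≤ s) (ht : 0 ≤ t) (hg : Measurable g)
    (hgb : ∀ y, |g y| ≤ C) (x : X) :
    PfR P (s + t) g x = PfR P s (PfR P t g) x := by
  have h := Kernel.integral_comp (κ := hP.kernel hs) (η := hP.kernel ht) (a := x) (f := g)
    (by rw [hP.kernel_comp hs ht]; exact hP.integrable (add_nonneg hs ht) x hg hgb)
  rwa [hP.kernel_comp hs ht] at h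

lemma measurable_PfR (hP : IsMarkovSemigroupR P) (ht : 0 ≤ t) (hg : Measurable g) :
    Measurable (PfR P t g) :=
  (hg.stronglyMeasurable.integral_kernel (κ := hP.kernel ht)).measurable

lemma abs_PfR_add_sub_le (hP : IsMarkovSemigroupR P) (hs : 0 ≤ s) (ht : 0 ≤ t)
    (hg : Measurable g) (hgb : ∀ y, |g y| ≤ C) (c : ℝ) (x : X) :
    |PfR P (s + t) g x - c| ≤ PfR P s (fun y => |PfR P t g y - c|) x := by
  have hsub := hP.PfR_sub hs (hP.measurable_PfR ht hg) measurable_const (hP.abs_PfR_le ht hgb)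
    (fun _ => le_refl |c|) x
  rw [hP.PfR_const hs] at hsub
  rw [hP.PfR_add hs ht hg hgb, hsub]
  exact abs_integral_le_integral_abs

lemma abs_PfR_add_sub_PfR_le (hP : IsMarkovSemigroupR P) (ht : 0 ≤ t) (hs : 0 ≤ s)
    (hg : Measurable g) (hgb : ∀ y, |g y| ≤ C) {ε : ℝ} (hε : ∀ y, |PfR P s g y - g y| ≤ ε)
    (x : X) : |PfR P (t + s) g x - PfR P t g x| ≤ ε := by
  rw [hP.PfR_add ht hs hg hgb,
    hP.PfR_sub ht (hP.measurable_PfR hs hg) hg (hP.abs_PfR_le hs hgb) hgb]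
  exact hP.abs_PfR_le ht hε x

lemma tendsto_PfR [PseudoMetricSpace X] {μs : Measure X} (hP : IsMarkovSemigroupR P)
    (hstab : AsympStableR P μs) (hg : Continuous g) (hgb : ∀ y, |g y| ≤ C) (x : X) :
    Tendsto (fun t => PfR P t g x) atTop (𝓝 (∫ y, g y ∂μs)) := by
  refine (hstab.2.2.2 (Measure.dirac x) inferInstance g hg ⟨C, hgb⟩).congr' ?_
  filter_upwards [eventually_ge_atTop 0] with t ht
  rw [Measure.dirac_bind (hP.measurable ht)]
  rfl

end IsMarkovSemigroupR

section Regularity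

variable {X : Type*} [PseudoMetricSpace X] [MeasurableSpace X] [BorelSpace X]

lemma exists_isOpen_measure_compl_lt_forall_ge {p : ℝ → X → Prop}
    (hloc : ∀ ξ, ∃ δ > 0, ∃ T, ∀ t ≥ T, ∀ y ∈ ball ξ δ, p t y) (ν : Measure X)
    [IsFiniteMeasure ν] {θ : ℝ≥0∞} (hθ : 0 < θ) :
    ∃ G, IsOpen G ∧ ν Gᶜ < θ ∧ ∃ T, ∀ t ≥ T, ∀ y ∈ G, p t y := by
  choose δ hδ T hT using hloc
  set G : ℕ → Set X := fun N => ⋃ ξ ∈ {ξ | T ξ ≤ N}, ball ξ (δ ξ)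
  have hGo : ∀ N, IsOpen (G N) := fun N => isOpen_biUnion fun ξ _ => isOpen_ball
  have hanti : Antitone fun N => (G N)ᶜ := fun M N hMN =>
    compl_subset_compl.mpr <| biUnion_subset_biUnion_left fun ξ (hξ : T ξ ≤ M) =>
      hξ.trans (Nat.cast_le.mpr hMN)
  have hcover : ⋂ N, (G N)ᶜ = ∅ := by
    rw [← compl_iUnion, compl_empty_iff, eq_univ_iff_forall]
    exact fun ξ => mem_iUnion.mpr ⟨⌈T ξ⌉₊, mem_biUnion (Nat.le_ceil (T ξ)) (mem_ball_self (hδ ξ))⟩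
  have htend := tendsto_measure_iInter_atTop (μ := ν)
    (fun N => (hGo N).measurableSet.compl.nullMeasurableSet) hanti ⟨0, measure_ne_top _ _⟩
  rw [hcover, measure_empty] at htend
  obtain ⟨N, hN⟩ := (htend.eventually (gt_mem_nhds hθ)).exists
  refine ⟨G N, hGo N, hN, N, fun t ht y hy => ?_⟩
  obtain ⟨ξ, hξ, hyξ⟩ := mem_iUnion₂.mp hy
  exact hT ξ t (le_trans hξ ht) y hyξ

lemma IsOpen.exists_continuous_eqOn_one_compl_integral_lt {G : Set X} (hG : IsOpen G)
    (ν : Measure X) [IsFiniteMeasure ν] {θ : ℝ} (hν : ν Gᶜ < ENNReal.ofReal θ) :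
    ∃ w : C(X, ℝ), (∀ y, w y ∈ Icc 0 1) ∧ EqOn w 1 Gᶜ ∧ ∫ y, w y ∂ν < θ := by
  obtain ⟨V, hGV, hVo, hVν⟩ := Set.exists_isOpen_lt_of_lt _ _ hν
  obtain ⟨w, hw0, hw1, hw01⟩ := exists_continuous_zero_one_of_isClosed hVo.isClosed_compl
    hG.isClosed_compl (disjoint_compl_left_iff_subset.mpr hGV)
  have hle : ∀ y, w y ≤ V.indicator 1 y := fun y => by
    by_cases hy : y ∈ V
    · simp [hy, (hw01 y).2]
    · simp [hy, hw0 hy]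
  refine ⟨w, hw01, hw1, ?_⟩
  calc ∫ y, w y ∂ν ≤ ∫ y, V.indicator 1 y ∂ν :=
        integral_mono (.of_bound w.continuous.aestronglyMeasurable 1 (.of_forall fun y => by
          rw [Real.norm_eq_abs, abs_le]; constructor <;> linarith [(hw01 y).1, (hw01 y).2]))
          ((integrable_const (1 : ℝ)).indicator hVo.measurableSet) hle
    _ = ν.real V := integral_indicator_one hVo.measurableSet
    _ < θ := ENNReal.toReal_lt_of_lt_ofReal hVν

end Regularity

def EventuallyDominatedNear {X : Type*} [PseudoMetricSpace X] [MeasurableSpace X]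
    (P : ℝ → X → Measure X) (f : X → ℝ) (c : ℝ) (h : X → ℝ) (x : X) : Prop :=
  ∃ δ > 0, ∃ T, ∀ t ≥ T, ∀ y ∈ ball x δ, |PfR P t f y - c| ≤ h y

section EventuallyDominatedNear

variable {X : Type*} [MetricSpace X] [MeasurableSpace X] {P : ℝ → X → Measure X}
  {μs : Measure X} {f h h' : X → ℝ} {c C C' : ℝ} {x : X}

lemma EventuallyDominatedNear.mono (hx : EventuallyDominatedNear P f c h x)
    (hle : ∀ y, h y ≤ h' y) : EventuallyDominatedNear P f c h' x := by
  obtain ⟨δ, hδ, T, hT⟩ := hx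
  exact ⟨δ, hδ, T, fun t ht y hy => (hT t ht y hy).trans (hle y)⟩

lemma isOpen_setOf_eventuallyDominatedNear :
    IsOpen {x | EventuallyDominatedNear P f c h x} := by
  refine Metric.isOpen_iff.mpr fun x ⟨δ, hδ, T, hT⟩ => ⟨δ / 2, half_pos hδ, fun x' hx' => ?_⟩
  refine ⟨δ / 2, half_pos hδ, T, fun t ht y hy => hT t ht y (ball_subset_ball' ?_ hy)⟩
  linarith [mem_ball.mp hx']

lemma dense_setOf_eventuallyDominatedNear_const [CompleteSpace X] (hFeller : FellerR P)
    (hf : Continuous f) (hfb : ∀ y, |f y| ≤ C)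
    (hconv : ∀ x, Tendsto (fun t => PfR P t f x) atTop (𝓝 c)) {a : ℝ} (ha : 0 < a) :
    Dense {x | EventuallyDominatedNear P f c (fun _ => a) x} := by
  set A : ℕ → Set X := fun N =>
    {x | ∀ s ≥ (N : ℝ), ∀ t ≥ (N : ℝ), |PfR P s f x - PfR P t f x| ≤ a}
  have hclosed : ∀ N, IsClosed (A N) := by
    intro N
    simp only [A, ofPred_forall]
    refine isClosed_iInter fun s => isClosed_iInter fun hs => isClosed_iInter fun t =>
      isClosed_iInter fun ht => isClosed_le ?_ continuous_const
    have h0 : ∀ r ≥ (N : ℝ), 0 ≤ r := fun r hr => (Nat.cast_nonneg N).trans hr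
    exact ((hFeller s (h0 s hs) f hf ⟨C, hfb⟩).1.sub (hFeller t (h0 t ht) f hf ⟨C, hfb⟩).1).abs
  have hcover : ⋃ N, A N = univ := by
    refine eq_univ_of_forall fun x => mem_iUnion.mpr ?_
    obtain ⟨T, hT⟩ := Metric.tendsto_atTop.mp (hconv x) (a / 2) (half_pos ha)
    refine ⟨⌈T⌉₊, fun s hs t ht => ?_⟩
    have hs' := hT s ((Nat.le_ceil T).trans hs)
    have ht' := hT t ((Nat.le_ceil T).trans ht)
    rw [Real.dist_eq] at hs' ht'
    linarith [abs_sub_le (PfR P s f x) c (PfR P t f x), abs_sub_comm c (PfR P t f x)]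
  refine (dense_iUnion_interior_of_closed hclosed hcover).mono ?_
  intro x hx
  obtain ⟨N, hxN⟩ := mem_iUnion.mp hx
  obtain ⟨δ, hδ, hball⟩ := Metric.isOpen_iff.mp isOpen_interior x hxN
  refine ⟨δ, hδ, N, fun t ht y hy => ?_⟩
  have hyA := interior_subset (hball hy)
  exact le_of_tendsto ((tendsto_const_nhds.sub (hconv y)).abs)
    ((eventually_ge_atTop (N : ℝ)).mono fun s hs => hyA t ht s hs)

variable [BorelSpace X]

lemma exists_continuous_integral_le_eventually_abs_PfR_sub_le (hP : IsMarkovSemigroupR P)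
    (hfb : ∀ y, |f y| ≤ C) (hc : |c| ≤ C) (hh : Continuous h) (hhb : ∀ y, |h y| ≤ C')
    (hdom : ∀ ξ, EventuallyDominatedNear P f c h ξ) (ν : Measure X) [IsFiniteMeasure ν]
    {θ : ℝ} (hθ : 0 < θ) :
    ∃ φ : X → ℝ, Continuous φ ∧ (∀ v, |φ v| ≤ C' + (C + C)) ∧
      ∫ v, φ v ∂ν ≤ ∫ v, h v ∂ν + θ ∧ ∃ T ≥ 0, ∀ s ≥ T, ∀ v, |PfR P s f v - c| ≤ φ v := by
  set M := C + C
  have hM : 0 ≤ M := by linarith [(abs_nonneg c).trans hc]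
  have hh0 : ∀ y, 0 ≤ h y := fun y => by
    obtain ⟨δ, hδ, T, hT⟩ := hdom y
    exact (abs_nonneg _).trans (hT T le_rfl y (mem_ball_self hδ))
  obtain ⟨G, hGo, hGν, T, hT⟩ := exists_isOpen_measure_compl_lt_forall_ge hdom ν
    (θ := ENNReal.ofReal (θ / (M + 1))) (ENNReal.ofReal_pos.mpr (by positivity))
  obtain ⟨w, hw01, hw1, hwν⟩ := hGo.exists_continuous_eqOn_one_compl_integral_lt ν hGν
  have hwb : ∀ v, ‖w v‖ ≤ 1 := fun v =>
    abs_le.mpr ⟨by linarith [(hw01 v).1], (hw01 v).2⟩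
  have hh_int : Integrable h ν := .of_bound hh.aestronglyMeasurable C' (.of_forall hhb)
  have hw_int : Integrable w ν := .of_bound w.continuous.aestronglyMeasurable 1 (.of_forall hwb)
  -- `h` dominates on `G` from time `T` on, and `M` bounds `|P_s f - c|` where `w = 1`
  refine ⟨fun v => h v + M * w v, hh.add (continuous_const.mul w.continuous), fun v => ?_, ?_,
    max T 0, le_max_right _ _, fun s hs v => ?_⟩
  · rw [abs_of_nonneg (add_nonneg (hh0 v) (mul_nonneg hM (hw01 v).1))]
    nlinarith [(le_abs_self (h v)).trans (hhb v), (hw01 v).2]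
  · rw [integral_add hh_int (hw_int.const_mul M), integral_const_mul]
    have hMθ : M * (θ / (M + 1)) ≤ θ := by
      rw [mul_div_assoc', div_le_iff₀ (by positivity)]
      nlinarith
    nlinarith [mul_le_mul_of_nonneg_left hwν.le hM]
  · by_cases hv : v ∈ G
    · exact (hT s (le_of_max_le_left hs) v hv).trans
        (le_add_of_nonneg_right (mul_nonneg hM (hw01 v).1))
    · simp only [hw1 hv, Pi.one_apply, mul_one]
      linarith [(abs_sub _ _).trans (add_le_add (hP.abs_PfR_le (le_of_max_le_right hs) hfb v) hc),
        hh0 v]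

lemma eventuallyDominatedNear_const_PfR (hP : IsMarkovSemigroupR P) (hFeller : FellerR P)
    (hf : Measurable f) (hfb : ∀ y, |f y| ≤ C) (hc : |c| ≤ C)
    (hh : Continuous h) (hhb : ∀ y, |h y| ≤ C') (hdom : ∀ ξ, EventuallyDominatedNear P f c h ξ)
    {m : ℝ} (hm : 0 ≤ m) (x : X) {σ : ℝ} (hσ : 0 < σ) :
    EventuallyDominatedNear P f c (fun _ => PfR P m h x + σ) x := by
  have := hP.isProbabilityMeasure hm x
  obtain ⟨φ, hφ, hφb, hφx, T, hT0, hT⟩ :=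
    exists_continuous_integral_le_eventually_abs_PfR_sub_le hP hfb hc hh hhb hdom (P m x)
      (half_pos hσ)
  obtain ⟨δ, hδ, hδφ⟩ := Metric.continuousAt_iff.mp
    ((hFeller m hm φ hφ ⟨_, hφb⟩).1.continuousAt (x := x)) (σ / 2) (half_pos hσ)
  refine ⟨δ, hδ, m + T, fun t ht y hy => ?_⟩
  have hts : T ≤ t - m := by linarith
  have hφy := (abs_lt.mp (hδφ (mem_ball.mp hy))).2
  have hdev : ∀ v, |PfR P (t - m) f v - c| ≤ C + C := fun v =>
    (abs_sub _ _).trans (add_le_add (hP.abs_PfR_le (hT0.trans hts) hfb v) hc)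
  calc |PfR P t f y - c| = |PfR P (m + (t - m)) f y - c| := by rw [add_sub_cancel]
    _ ≤ PfR P m (fun v => |PfR P (t - m) f v - c|) y :=
        hP.abs_PfR_add_sub_le hm (hT0.trans hts) hf hfb c y
    _ ≤ PfR P m φ y :=
        hP.PfR_mono hm ((hP.measurable_PfR (hT0.trans hts) hf).sub measurable_const).abs
          hφ.measurable (fun v => (abs_abs _).trans_le (hdev v)) hφb (hT _ hts) y
    _ ≤ PfR P m h x + σ := by
        unfold PfR at hφy ⊢
        linarith

lemma eventuallyDominatedNear_sub_mul_measure_ball (hP : IsMarkovSemigroupR P) (hFeller : FellerR P)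
    (hstab : AsympStableR P μs) (hf : Continuous f) (hfb : ∀ y, |f y| ≤ C) {a b : ℝ}
    (hba : b ≤ a) {p : X} {r : ℝ} (hr : 0 < r)
    (hnear : ∀ ξ ∈ ball p (3 * r), EventuallyDominatedNear P f (∫ y, f y ∂μs) (fun _ => b) ξ)
    (hall : ∀ ξ, EventuallyDominatedNear P f (∫ y, f y ∂μs) (fun _ => a) ξ) (x : X) {σ : ℝ}
    (hσ : 0 < σ) :
    EventuallyDominatedNear P f (∫ y, f y ∂μs)
      (fun _ => a - (a - b) * μs.real (ball p r) + σ) x := by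
  have := hstab.1
  obtain ⟨g, hg0, hg1, hg01⟩ := exists_continuous_zero_one_of_isClosed
    (isOpen_ball (x := p) (ε := 2 * r)).isClosed_compl isClosed_closedBall
    (disjoint_compl_left_iff_subset.mpr (closedBall_subset_ball (by linarith : r < 2 * r)))
  set h : X → ℝ := fun y => a - (a - b) * g y
  have hgb : ∀ y, |g y| ≤ 1 := fun y => abs_le.mpr ⟨by linarith [(hg01 y).1], (hg01 y).2⟩
  have hh : Continuous h := continuous_const.sub (continuous_const.mul g.continuous)
  have hhb : ∀ y, |h y| ≤ |a| + |a - b| := fun y => (abs_sub _ _).trans <| add_le_add_right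
    ((abs_mul _ _).trans_le (mul_le_of_le_one_right (abs_nonneg _) (hgb y))) |a|
  have hdom : ∀ ξ, EventuallyDominatedNear P f (∫ y, f y ∂μs) h ξ := by
    intro ξ
    by_cases hξ : ξ ∈ ball p (3 * r)
    · exact (hnear ξ hξ).mono fun y => by nlinarith [(hg01 y).2]
    · obtain ⟨δ, hδ, T, hT⟩ := hall ξ
      refine ⟨min δ r, lt_min hδ hr, T, fun t ht y hy => ?_⟩
      have hy_far : y ∈ (ball p (2 * r))ᶜ := by
        have := dist_triangle ξ y p
        simp only [mem_ball, not_lt, mem_compl_iff] at hξ hy ⊢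
        linarith [dist_comm ξ y, min_le_right δ r]
      simpa [h, hg0 hy_far] using hT t ht y (ball_subset_ball (min_le_left _ _) hy)
  have hκ : μs.real (ball p r) ≤ ∫ y, g y ∂μs := by
    rw [← integral_indicator_one measurableSet_ball]
    refine integral_mono ((integrable_const (1 : ℝ)).indicator measurableSet_ball)
      (.of_bound g.continuous.aestronglyMeasurable 1 (.of_forall hgb)) fun y => ?_
    by_cases hy : y ∈ ball p r
    · simp [hy, hg1 (ball_subset_closedBall hy)]
    · simp [hy, (hg01 y).1]
  have hh_int : ∫ y, h y ∂μs = a - (a - b) * ∫ y, g y ∂μs := by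
    rw [integral_sub (integrable_const a)
      ((Integrable.of_bound g.continuous.aestronglyMeasurable 1 (.of_forall hgb)).const_mul _),
      integral_const_mul]
    simp
  obtain ⟨m, hm, hm0⟩ := (((hP.tendsto_PfR hstab hh hhb x).eventually
    (gt_mem_nhds (lt_add_of_pos_right _ (half_pos hσ)))).and (eventually_ge_atTop 0)).exists
  refine (eventuallyDominatedNear_const_PfR hP hFeller hf.measurable hfb
    (abs_integral_le_of_abs_le hfb) hh hhb hdom hm0 x (half_pos hσ)).mono fun _ => ?_
  nlinarith [mul_le_mul_of_nonneg_left hκ (sub_nonneg.mpr hba)]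

lemma eventuallyDominatedNear_const_of_pos [CompleteSpace X] (hP : IsMarkovSemigroupR P)
    (hFeller : FellerR P) (hstab : AsympStableR P μs) (hint : (interior (msupp μs)).Nonempty)
    (hf : Continuous f) (hfb : ∀ y, |f y| ≤ C) {a : ℝ} (ha : 0 < a) (x : X) :
    EventuallyDominatedNear P f (∫ y, f y ∂μs) (fun _ => a) x := by
  have := hstab.1
  set A := {a | ∀ x, EventuallyDominatedNear P f (∫ y, f y ∂μs) (fun _ => a) x}
  have hA_mono : ∀ a ∈ A, ∀ a', a ≤ a' → a' ∈ A := fun a ha a' h x => (ha x).mono fun _ => h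
  have hA_ne : C + C ∈ A := fun x => ⟨1, one_pos, 0, fun t ht y _ =>
    (abs_sub _ _).trans (add_le_add (hP.abs_PfR_le ht hfb y) (abs_integral_le_of_abs_le hfb))⟩
  have hA_bdd : BddBelow A := by
    obtain ⟨q, -⟩ := hint
    refine ⟨0, fun a ha => ?_⟩
    obtain ⟨δ, hδ, T, hT⟩ := ha q
    exact (abs_nonneg _).trans (hT T le_rfl q (mem_ball_self hδ))
  suffices hS : sInf A ≤ 0 by
    obtain ⟨a', ha', ha'a⟩ := exists_lt_of_csInf_lt ⟨_, hA_ne⟩ (hS.trans_lt ha)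
    exact hA_mono a' ha' a ha'a.le x
  by_contra! hS
  set S := sInf A
  have hU := dense_setOf_eventuallyDominatedNear_const hFeller hf hfb
    (hP.tendsto_PfR hstab hf hfb) (half_pos hS)
  obtain ⟨p, hpU, hpsupp⟩ := hU.exists_mem_open isOpen_interior hint
  obtain ⟨ε, hε, hball⟩ := Metric.isOpen_iff.mp
    (isOpen_setOf_eventuallyDominatedNear.inter isOpen_interior) p ⟨hpU, hpsupp⟩
  have hκ : 0 < μs.real (ball p (ε / 3)) := ENNReal.toReal_pos
    (interior_subset hpsupp (ε / 3) (by positivity)).ne' (measure_ne_top _ _)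
  set κ := μs.real (ball p (ε / 3))
  obtain ⟨a₀, ha₀A, ha₀⟩ := exists_lt_of_csInf_lt ⟨_, hA_ne⟩
    (lt_add_of_pos_right S (by positivity : 0 < S * κ / 8))
  have hSa₀ : S ≤ a₀ := csInf_le hA_bdd ha₀A
  have himp : a₀ - (a₀ - S / 2) * κ + S * κ / 8 ∈ A := fun x =>
    eventuallyDominatedNear_sub_mul_measure_ball hP hFeller hstab hf hfb (by linarith) (by positivity)
      (fun ξ hξ => (hball (by rwa [mul_div_cancel₀ ε three_ne_zero] at hξ)).1) ha₀A x
      (by positivity)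
  nlinarith [csInf_le hA_bdd himp, mul_le_mul_of_nonneg_right hSa₀ hκ.le]

lemma eventualEPropR_of_asympStableR [CompleteSpace X] (hP : IsMarkovSemigroupR P)
    (hFeller : FellerR P) (hstab : AsympStableR P μs) (hint : (interior (msupp μs)).Nonempty)
    (z : X) : EventualEPropR P z := by
  intro f ⟨⟨K, hK⟩, C, hfb⟩ ε hε
  obtain ⟨δ, hδ, T, hT⟩ := eventuallyDominatedNear_const_of_pos hP hFeller hstab hint
    hK.continuous hfb (by positivity : 0 < ε / 4) z
  refine ⟨δ, hδ, max T 0, le_max_right _ _, fun x hx t ht => ?_⟩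
  have hx' := hT t (le_of_max_le_left ht) x (mem_ball.mpr hx)
  have hz' := hT t (le_of_max_le_left ht) z (mem_ball_self hδ)
  linarith [abs_sub_le (PfR P t f x) (∫ y, f y ∂μs) (PfR P t f z),
    abs_sub_comm (∫ y, f y ∂μs) (PfR P t f z)]

lemma exists_forall_abs_PfR_add_sub_PfR_le (hP : IsMarkovSemigroupR P) (hsc : StrongContR P)
    (hf : Continuous f) (hfb : ∀ y, |f y| ≤ C) {ε : ℝ} (hε : 0 < ε) :
    ∃ η > 0, ∀ t ≥ 0, ∀ s ∈ Ico 0 η, ∀ y, |PfR P (t + s) f y - PfR P t f y| ≤ ε := by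
  obtain ⟨η, hη, hsmall⟩ := hsc f hf ⟨C, hfb⟩ ε hε
  refine ⟨η, hη, fun t ht s ⟨hs0, hsη⟩ y =>
    hP.abs_PfR_add_sub_PfR_le ht hs0 hf.measurable hfb (fun v => ?_) y⟩
  rcases hs0.eq_or_lt with rfl | hs
  · simp [hP.PfR_zero, hε.le]
  · exact (hsmall s hs hsη v).le

lemma eventually_forall_Icc_abs_PfR_sub_lt (hP : IsMarkovSemigroupR P) (hFeller : FellerR P)
    (hsc : StrongContR P) (hf : Continuous f) (hfb : ∀ y, |f y| ≤ C) (z : X) (T : ℝ) {ε : ℝ}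
    (hε : 0 < ε) : ∀ᶠ x in 𝓝 z, ∀ t ∈ Icc 0 T, |PfR P t f x - PfR P t f z| < ε := by
  obtain ⟨η, hη, hstep⟩ :=
    exists_forall_abs_PfR_add_sub_PfR_le hP hsc hf hfb (by positivity : 0 < ε / 4)
  have hgrid : ∀ᶠ x in 𝓝 z, ∀ i ∈ Finset.range (⌈T / η⌉₊ + 1),
      |PfR P (i * η) f x - PfR P (i * η) f z| < ε / 2 := by
    refine (eventually_all_finset _).mpr fun i _ => ?_
    have hcont := (hFeller (i * η) (by positivity) f hf ⟨C, hfb⟩).1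
    exact (Metric.tendsto_nhds.mp (hcont.tendsto z) (ε / 2) (half_pos hε)).mono
      fun x hx => by rwa [Real.dist_eq] at hx
  filter_upwards [hgrid] with x hx t ⟨ht0, htT⟩
  set i := ⌊t / η⌋₊
  have hiη : i * η ≤ t := (le_div_iff₀ hη).mp (Nat.floor_le (div_nonneg ht0 hη.le))
  have htη : t - i * η < η := by
    have := Nat.lt_floor_add_one (t / η)
    rw [div_lt_iff₀ hη] at this
    linarith
  have hi : i ∈ Finset.range (⌈T / η⌉₊ + 1) := Finset.mem_range.mpr <| Nat.lt_succ_of_le <|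
    (Nat.floor_le_floor (div_le_div_of_nonneg_right htT hη.le)).trans (Nat.floor_le_ceil _)
  have hstep' := fun y => hstep (i * η) (by positivity) (t - i * η) ⟨by linarith, htη⟩ y
  simp only [add_sub_cancel] at hstep'
  linarith [hx i hi, hstep' x, hstep' z, abs_sub_le (PfR P t f x) (PfR P (i * η) f x) (PfR P t f z),
    abs_sub_le (PfR P (i * η) f x) (PfR P (i * η) f z) (PfR P t f z),
    abs_sub_comm (PfR P (i * η) f z) (PfR P t f z)]

end EventuallyDominatedNear

theorem stmt16_general {X : Type*} [MetricSpace X] [CompleteSpace X]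
    [MeasurableSpace X] [BorelSpace X]
    (P : ℝ → X → Measure X) (hP : IsMarkovSemigroupR P) (hFeller : FellerR P)
    (hsc : StrongContR P) (μs : Measure X) (hstab : AsympStableR P μs)
    (hint : (interior (msupp μs)).Nonempty) :
    ∀ z : X, EPropR P z := by
  intro z f hfL ε hε
  obtain ⟨⟨K, hK⟩, C, hfb⟩ := hfL
  obtain ⟨δ₁, hδ₁, T, -, hT⟩ :=
    eventualEPropR_of_asympStableR hP hFeller hstab hint z f ⟨⟨K, hK⟩, C, hfb⟩ ε hε
  obtain ⟨δ₂, hδ₂, hfin⟩ := Metric.eventually_nhds_iff.mp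
    (eventually_forall_Icc_abs_PfR_sub_lt hP hFeller hsc hK.continuous hfb z T hε)
  refine ⟨min δ₁ δ₂, lt_min hδ₁ hδ₂, fun x hx t ht => ?_⟩
  rcases le_total T t with hTt | htT
  · exact hT x (hx.trans_le (min_le_left _ _)) t hTt
  · exact hfin (hx.trans_le (min_le_right _ _)) t ⟨ht, htT⟩

/-- for `T = [0,∞)`, a Feller, strongly continuous, asymptotically
stable Markov semigroup whose unique invariant measure `μ*` has support with nonempty
interior satisfies the e-property at every point of `X`. -/
theorem stmt16 {X : Type*} [MetricSpace X] [CompleteSpace X]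
    [TopologicalSpace.SeparableSpace X] [MeasurableSpace X] [BorelSpace X]
    (P : ℝ → X → Measure X) (hP : IsMarkovSemigroupR P) (hFeller : FellerR P)
    (hsc : StrongContR P) (μs : Measure X) (hstab : AsympStableR P μs)
    (hint : (interior (msupp μs)).Nonempty) :
    ∀ z : X, EPropR P z :=
  stmt16_general P hP hFeller hsc μs hstab hint
end
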